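/- arXiv:2603.03886 — 2 statements merged into one kernel-verified Lean document; each statement's English description precedes it below -/
import Mathlib

section
/- Let μ ⊆ λ be Young diagrams and let T ∈ X_μ^λ be mergeable. Then cell(Φ(T)) = cell(T), and cell(T) is a splittable cell of Φ(T); in particular Φ(T) is splittable. -/
/-- The cells of the skew shape `λ/μ`. -/
def skewCells (μ lam : YoungDiagram) : Finset (ℕ × ℕ) := lam.cells \ μ.cells

/-- The total order on cells induced by a filling `f`: a cell `c = (i,j)` is smaller than
`c' = (i',j')` if `f c < f c'`, or `f c = f c'` and `j < j'`, or
`f c = f c'`, `j = j'` and `i > i'`. -/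
def cellLT (f : ℕ × ℕ → ℕ) (c c' : ℕ × ℕ) : Prop :=
  f c < f c' ∨ (f c = f c' ∧ (c.2 < c'.2 ∨ (c.2 = c'.2 ∧ c'.1 < c.1)))

/-- `f` is a semistandard filling on the cell set `s`: entries are positive,
weakly increasing along rows (left to right) and strictly increasing down columns. -/
def IsSSYTOn (f : ℕ × ℕ → ℕ) (s : Finset (ℕ × ℕ)) : Prop :=
  (∀ c ∈ s, 0 < f c) ∧
  (∀ i j j', j ≤ j' → (i, j) ∈ s → (i, j') ∈ s → f (i, j) ≤ f (i, j')) ∧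
  (∀ i i' j, i < i' → (i, j) ∈ s → (i', j) ∈ s → f (i, j) < f (i', j))

/-- An element of `X_μ^λ`: a chain `μ = λ₀ ⊊ λ₁ ⊊ ⋯ ⊊ λ_k = λ` of Young diagrams together
with a filling of `λ/μ` whose restriction to each piece `λᵢ₊₁/λᵢ` is a semistandard Young
tableau.  (The tuple `(T⁽¹⁾, …, T⁽ᵏ⁾)` is recorded as the single concatenated filling
`entry`, normalized to be `0` outside `λ/μ`; the chain is recorded as a function on `ℕ`
constantly equal to `λ` from index `k` on.) -/
structure XTuple (μ lam : YoungDiagram) where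
  k : ℕ
  chain : ℕ → YoungDiagram
  chain_zero : chain 0 = μ
  chain_last : ∀ i, k ≤ i → chain i = lam
  chain_strict : ∀ i < k, (chain i).cells ⊂ (chain (i + 1)).cells
  entry : ℕ × ℕ → ℕ
  entry_eq_zero : ∀ c ∉ skewCells μ lam, entry c = 0
  piece_ssyt : ∀ i < k, IsSSYTOn entry ((chain (i + 1)).cells \ (chain i).cells)

/-- The cells of the `i`-th piece `T⁽ⁱ⁺¹⁾` (0-indexed: piece `i` has shape `λᵢ₊₁/λᵢ`). -/
def pieceCells {μ lam : YoungDiagram} (T : XTuple μ lam) (i : ℕ) : Finset (ℕ × ℕ) :=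
  (T.chain (i + 1)).cells \ (T.chain i).cells

/-- The length `ℓ(T) = k` of an element of `X_μ^λ`. -/
def XTuple.len {μ lam : YoungDiagram} (T : XTuple μ lam) : ℕ := T.k

/-- The cell `c`, lying in piece `i`, is splittable: its piece has more than one cell and
`c` is the largest cell of its piece. -/
def SplittableAt {μ lam : YoungDiagram} (T : XTuple μ lam) (c : ℕ × ℕ) (i : ℕ) : Prop :=
  i < T.k ∧ c ∈ pieceCells T i ∧ 1 < (pieceCells T i).card ∧
    ∀ c' ∈ pieceCells T i, c' ≠ c → cellLT T.entry c' c

/-- The cell `c` is splittable in `T`. -/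
def SplittableCell {μ lam : YoungDiagram} (T : XTuple μ lam) (c : ℕ × ℕ) : Prop :=
  ∃ i, SplittableAt T c i

/-- The cell `c`, lying in piece `i`, is mergeable: it is not in the first piece, its piece
is a single cell, the union of its piece with the previous piece is semistandard, and `c`
is larger than every cell of the previous piece. -/
def MergeableAt {μ lam : YoungDiagram} (T : XTuple μ lam) (c : ℕ × ℕ) (i : ℕ) : Prop :=
  1 ≤ i ∧ i < T.k ∧ c ∈ pieceCells T i ∧ (pieceCells T i).card = 1 ∧
    IsSSYTOn T.entry (pieceCells T (i - 1) ∪ pieceCells T i) ∧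
    ∀ c' ∈ pieceCells T (i - 1), cellLT T.entry c' c

/-- The cell `c` is mergeable in `T`. -/
def MergeableCell {μ lam : YoungDiagram} (T : XTuple μ lam) (c : ℕ × ℕ) : Prop :=
  ∃ i, MergeableAt T c i

/-- `cell(T)`: the largest cell of `T` (in the total order `cellLT T.entry`) among the
splittable or mergeable cells, or `none` (i.e. `∅`) if there is no such cell. -/
noncomputable def cellOf {μ lam : YoungDiagram} (T : XTuple μ lam) : Option (ℕ × ℕ) := by
  classical
  exact if h : ∃ c, (SplittableCell T c ∨ MergeableCell T c) ∧
      ∀ c', (SplittableCell T c' ∨ MergeableCell T c') → c' ≠ c → cellLT T.entry c' c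
    then some h.choose else none

/-- `T` is splittable if `cell(T)` is a splittable cell. -/
def XTuple.Splittable {μ lam : YoungDiagram} (T : XTuple μ lam) : Prop :=
  ∃ c, cellOf T = some c ∧ SplittableCell T c

/-- `T` is mergeable if `cell(T)` is a mergeable cell. -/
def XTuple.Mergeable {μ lam : YoungDiagram} (T : XTuple μ lam) : Prop :=
  ∃ c, cellOf T = some c ∧ MergeableCell T c

/-- The graph of the map `Φ`:  if `cell(T)` is splittable and lies in piece `i`, the piece
is replaced by the pair `(T⁽ⁱ⁾ ∖ {cell(T)}, {cell(T)})`, i.e. the Young diagram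
`λᵢ₊₁ ∖ {cell(T)}` is inserted into the chain; if `cell(T)` is mergeable and lies in piece
`i`, the pieces `i-1` and `i` are merged, i.e. `λᵢ` is deleted from the chain; if
`cell(T) = ∅` then `T` is fixed.  The filling is unchanged in all cases. -/
def PhiRel {μ lam : YoungDiagram} (T T' : XTuple μ lam) : Prop :=
  (∃ c i, cellOf T = some c ∧ SplittableAt T c i ∧
      T'.k = T.k + 1 ∧ T'.entry = T.entry ∧
      (∀ j, j ≤ i → T'.chain j = T.chain j) ∧
      (T'.chain (i + 1)).cells = (T.chain (i + 1)).cells.erase c ∧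
      (∀ j, i + 2 ≤ j → T'.chain j = T.chain (j - 1))) ∨
  (∃ c i, cellOf T = some c ∧ MergeableAt T c i ∧
      T'.k + 1 = T.k ∧ T'.entry = T.entry ∧
      (∀ j, j < i → T'.chain j = T.chain j) ∧
      (∀ j, i ≤ j → T'.chain j = T.chain (j + 1))) ∨
  (cellOf T = none ∧ T' = T)

/-- The map `Φ : X_μ^λ → X_μ^λ`. -/
noncomputable def Phi {μ lam : YoungDiagram} (T : XTuple μ lam) : XTuple μ lam := by
  classical
  exact if h : ∃ T', PhiRel T T' then h.choose else T


section Aux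

variable {μ lam : YoungDiagram}

lemma cellLT_asymm {f : ℕ × ℕ → ℕ} {a b : ℕ × ℕ} (h : cellLT f a b) (h' : cellLT f b a) :
    False := by
  unfold cellLT at h h'
  omega

lemma chain_subset_succ (T : XTuple μ lam) (j : ℕ) :
    (T.chain j).cells ⊆ (T.chain (j + 1)).cells := by
  by_cases h : j < T.k
  · exact (T.chain_strict j h).subset
  · rw [T.chain_last j (by omega), T.chain_last (j + 1) (by omega)]

lemma chain_mono (T : XTuple μ lam) {j j' : ℕ} (h : j ≤ j') :
    (T.chain j).cells ⊆ (T.chain j').cells := by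
  induction j', h using Nat.le_induction with
  | base => exact subset_rfl
  | succ n hn ih => exact ih.trans (chain_subset_succ T n)

lemma piece_index_eq (T : XTuple μ lam) {c : ℕ × ℕ} {i i' : ℕ}
    (h : c ∈ pieceCells T i) (h' : c ∈ pieceCells T i') : i = i' := by
  by_contra hne
  simp only [pieceCells, Finset.mem_sdiff] at h h'
  rcases Nat.lt_or_ge i i' with hlt | hge
  · exact h'.2 (chain_mono T (by omega : i + 1 ≤ i') h.1)
  · exact h.2 (chain_mono T (by omega : i' + 1 ≤ i) h'.1)

lemma piece_nonempty (T : XTuple μ lam) {i : ℕ} (h : i < T.k) :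
    (pieceCells T i).Nonempty := by
  obtain ⟨x, hx, hx'⟩ := Finset.exists_of_ssubset (T.chain_strict i h)
  exact ⟨x, Finset.mem_sdiff.mpr ⟨hx, hx'⟩⟩

lemma isSSYTOn_mono {f : ℕ × ℕ → ℕ} {s t : Finset (ℕ × ℕ)} (h : IsSSYTOn f s) (hts : t ⊆ s) :
    IsSSYTOn f t :=
  ⟨fun c hc => h.1 c (hts hc), fun i j j' hj h1 h2 => h.2.1 i j j' hj (hts h1) (hts h2),
   fun i i' j hi h1 h2 => h.2.2 i i' j hi (hts h1) (hts h2)⟩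

lemma cellOf_spec {T : XTuple μ lam} {c : ℕ × ℕ} (hc : cellOf T = some c) :
    (SplittableCell T c ∨ MergeableCell T c) ∧
      ∀ c', (SplittableCell T c' ∨ MergeableCell T c') → c' ≠ c → cellLT T.entry c' c := by
  classical
  unfold cellOf at hc
  split_ifs at hc with h
  exact Option.some.inj hc ▸ h.choose_spec

lemma cellOf_eq_some {T : XTuple μ lam} {c : ℕ × ℕ}
    (h1 : SplittableCell T c ∨ MergeableCell T c)
    (h2 : ∀ c', (SplittableCell T c' ∨ MergeableCell T c') → c' ≠ c → cellLT T.entry c' c) :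
    cellOf T = some c := by
  classical
  have hex : ∃ c, (SplittableCell T c ∨ MergeableCell T c) ∧
      ∀ c', (SplittableCell T c' ∨ MergeableCell T c') → c' ≠ c → cellLT T.entry c' c :=
    ⟨c, h1, h2⟩
  unfold cellOf
  rw [dif_pos hex]
  congr 1
  obtain ⟨hs1, hs2⟩ := hex.choose_spec
  by_contra hne
  exact cellLT_asymm (h2 _ hs1 hne) (hs2 c h1 (Ne.symm hne))

lemma phiRel_phi {T : XTuple μ lam} (h : ∃ T', PhiRel T T') : PhiRel T (Phi T) := by
  classical
  unfold Phi
  rw [dif_pos h]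
  exact h.choose_spec

lemma sdiff_union_pieces (T : XTuple μ lam) (m : ℕ) :
    (T.chain (m + 2)).cells \ (T.chain m).cells = pieceCells T m ∪ pieceCells T (m + 1) := by
  rw [pieceCells, pieceCells, Finset.union_comm]
  exact (Finset.sdiff_union_sdiff_cancel (chain_subset_succ T (m + 1))
    (chain_subset_succ T m)).symm

noncomputable def mergedTuple (T : XTuple μ lam) (m : ℕ) (hk : m + 1 < T.k)
    (hss : IsSSYTOn T.entry (pieceCells T m ∪ pieceCells T (m + 1))) : XTuple μ lam where
  k := T.k - 1
  chain := fun j => if j < m + 1 then T.chain j else T.chain (j + 1)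
  chain_zero := by simp [T.chain_zero]
  chain_last := fun j hj => by
    beta_reduce
    rw [if_neg (by omega)]
    exact T.chain_last _ (by omega)
  chain_strict := fun j hj => by
    beta_reduce
    by_cases h1 : j + 1 < m + 1
    · rw [if_pos (by omega), if_pos h1]
      exact T.chain_strict j (by omega)
    · by_cases h2 : j < m + 1
      · rw [if_pos h2, if_neg h1]
        exact ssubset_of_ssubset_of_subset (T.chain_strict j (by omega))
          (chain_mono T (by omega))
      · rw [if_neg h2, if_neg h1]
        exact T.chain_strict (j + 1) (by omega)
  entry := T.entry
  entry_eq_zero := T.entry_eq_zero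
  piece_ssyt := fun j hj => by
    beta_reduce
    by_cases h1 : j + 1 < m + 1
    · rw [if_pos h1, if_pos (show j < m + 1 by omega)]
      exact T.piece_ssyt j (by omega)
    · by_cases h2 : j < m + 1
      · rw [if_pos h2, if_neg h1]
        have hjm : j = m := by omega
        subst hjm
        rw [show j + 1 + 1 = j + 2 from rfl, sdiff_union_pieces T j]
        exact hss
      · rw [if_neg h2, if_neg h1]
        exact T.piece_ssyt (j + 1) (by omega)

lemma phiRel_merged {T : XTuple μ lam} {c : ℕ × ℕ} {m : ℕ} (hc : cellOf T = some c)
    (hma : MergeableAt T c (m + 1)) :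
    PhiRel T (mergedTuple T m hma.2.1 hma.2.2.2.2.1) := by
  refine Or.inr (Or.inl ⟨c, m + 1, hc, hma, ?_, rfl, fun j hj => ?_, fun j hj => ?_⟩)
  · have := hma.2.1
    show T.k - 1 + 1 = T.k
    omega
  · exact if_pos hj
  · exact if_neg (by omega)

end Aux

/-- If `T ∈ X_μ^λ` is mergeable, then `cell(Φ(T)) = cell(T)` and `cell(T)` is a splittable
cell of `Φ(T)`; in particular `Φ(T)` is splittable. -/
theorem cellOf_phi_of_mergeable (μ lam : YoungDiagram) (hsub : μ ≤ lam)
    (T : XTuple μ lam) (c : ℕ × ℕ)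
    (hc : cellOf T = some c) (hm : MergeableCell T c) :
    cellOf (Phi T) = some c ∧ SplittableCell (Phi T) c ∧ (Phi T).Splittable := by
  classical
  have hTmax := (cellOf_spec hc).2
  obtain ⟨i0, hma0⟩ := hm
  obtain ⟨m0, rfl⟩ : ∃ m, i0 = m + 1 := ⟨i0 - 1, by have := hma0.1; omega⟩
  have hex : ∃ T', PhiRel T T' := ⟨_, phiRel_merged hc hma0⟩
  rcases phiRel_phi hex with ⟨c0, i, hc0, hsp, -⟩ |
    ⟨c0, i, hc0, hma, hk', hent, hlow, hhigh⟩ | ⟨hnone, -⟩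
  · -- split case: impossible since c is in a singleton piece
    obtain rfl : c = c0 := Option.some.inj (hc.symm.trans hc0)
    obtain rfl := piece_index_eq T hsp.2.1 hma0.2.2.1
    have h1 := hsp.2.2.1
    have h2 := hma0.2.2.2.1
    omega
  · obtain rfl : c = c0 := Option.some.inj (hc.symm.trans hc0)
    obtain ⟨m, rfl⟩ : ∃ m, i = m + 1 := ⟨i - 1, by have := hma.1; omega⟩
    obtain ⟨-, hm1, hcm, hcard1, hssu, hgt⟩ := hma
    have hgt' : ∀ c' ∈ pieceCells T m, cellLT T.entry c' c := hgt
    set T' := Phi T with hT'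
    have hpl : ∀ j, j < m → pieceCells T' j = pieceCells T j := fun j hj => by
      unfold pieceCells
      rw [hlow j (by omega), hlow (j + 1) (by omega)]
    have hpm : pieceCells T' m = pieceCells T m ∪ pieceCells T (m + 1) := by
      unfold pieceCells
      rw [hlow m (by omega), hhigh (m + 1) le_rfl]
      exact sdiff_union_pieces T m
    have hph : ∀ j, m + 1 ≤ j → pieceCells T' j = pieceCells T (j + 1) := fun j hj => by
      unfold pieceCells
      rw [hhigh j hj, hhigh (j + 1) (by omega)]
    have hsingle : pieceCells T (m + 1) = {c} := by
      obtain ⟨a, ha⟩ := Finset.card_eq_one.mp hcard1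
      rw [ha] at hcm ⊢
      simp only [Finset.mem_singleton] at hcm
      rw [hcm]
    obtain ⟨d, hd⟩ := piece_nonempty T (show m < T.k by omega)
    have hdc : d ≠ c := fun h => by
      subst h
      have := piece_index_eq T hd hcm
      omega
    have hbig : 1 < (pieceCells T' m).card := by
      rw [hpm]
      exact Finset.one_lt_card.mpr
        ⟨d, Finset.mem_union_left _ hd, c, Finset.mem_union_right _ hcm, hdc⟩
    have hsplit : SplittableAt T' c m := by
      refine ⟨by omega, ?_, hbig, ?_⟩
      · rw [hpm]; exact Finset.mem_union_right _ hcm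
      · intro c'' hc'' hne
        rw [hpm, Finset.mem_union] at hc''
        rw [hent]
        rcases hc'' with h | h
        · exact hgt' c'' h
        · rw [hsingle, Finset.mem_singleton] at h
          exact absurd h hne
    have hmax : ∀ c', (SplittableCell T' c' ∨ MergeableCell T' c') → c' ≠ c →
        cellLT T'.entry c' c := by
      intro c' hsc hne
      rw [hent]
      rcases hsc with ⟨j, hjk, hmem, hcard, hmaxj⟩ | ⟨j, hj1, hjk, hmem, hcardj, hssj, hgtj⟩
      · -- c' splittable in T' at j
        rcases lt_trichotomy j m with hjm | hjm | hjm
        · rw [hpl j hjm] at hmem hcard hmaxj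
          rw [hent] at hmaxj
          exact hTmax c' (Or.inl ⟨j, ⟨by omega, hmem, hcard, hmaxj⟩⟩) hne
        · subst hjm
          rw [hpm, Finset.mem_union] at hmem
          rcases hmem with h | h
          · exact hgt' c' h
          · rw [hsingle, Finset.mem_singleton] at h
            exact absurd h hne
        · rw [hph j (by omega)] at hmem hcard hmaxj
          rw [hent] at hmaxj
          exact hTmax c' (Or.inl ⟨j + 1, ⟨by omega, hmem, hcard, hmaxj⟩⟩) hne
      · -- c' mergeable in T' at j
        obtain ⟨n, rfl⟩ : ∃ n, j = n + 1 := ⟨j - 1, by omega⟩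
        have hssj' : IsSSYTOn T'.entry (pieceCells T' n ∪ pieceCells T' (n + 1)) := hssj
        have hgtj' : ∀ c'' ∈ pieceCells T' n, cellLT T'.entry c'' c' := hgtj
        rcases lt_trichotomy n m with hnm | hnm | hnm
        · rcases Nat.lt_or_ge (n + 1) m with hnm1 | hnm1
          · rw [hpl (n + 1) hnm1] at hmem hcardj
            rw [hpl n (by omega), hpl (n + 1) hnm1, hent] at hssj'
            rw [hpl n (by omega), hent] at hgtj'
            exact hTmax c'
              (Or.inr ⟨n + 1, ⟨by omega, by omega, hmem, hcardj, hssj', hgtj'⟩⟩) hne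
          · rw [show n + 1 = m by omega] at hcardj
            omega
        · subst hnm
          rw [hph (n + 1) le_rfl] at hmem hcardj
          rw [hpm, hph (n + 1) le_rfl, hent] at hssj'
          rw [hpm, hent] at hgtj'
          have hss2 : IsSSYTOn T.entry (pieceCells T (n + 1) ∪ pieceCells T (n + 2)) :=
            isSSYTOn_mono hssj' (by
              intro x hx
              rcases Finset.mem_union.mp hx with h | h
              · exact Finset.mem_union_left _ (Finset.mem_union_right _ h)
              · exact Finset.mem_union_right _ h)
          have hgt2 : ∀ c'' ∈ pieceCells T (n + 1), cellLT T.entry c'' c' := fun c'' h =>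
            hgtj' c'' (Finset.mem_union_right _ h)
          exact hTmax c'
            (Or.inr ⟨n + 2, ⟨by omega, by omega, hmem, hcardj, hss2, hgt2⟩⟩) hne
        · have hne' : c' ≠ c := hne
          rw [hph (n + 1) (by omega)] at hmem hcardj
          rw [hph n (by omega), hph (n + 1) (by omega), hent] at hssj'
          rw [hph n (by omega), hent] at hgtj'
          exact hTmax c'
            (Or.inr ⟨n + 2, ⟨by omega, by omega, hmem, hcardj, hssj', hgtj'⟩⟩) hne
    have hcellT' : cellOf T' = some c := cellOf_eq_some (Or.inl ⟨m, hsplit⟩) hmax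
    exact ⟨hcellT', ⟨m, hsplit⟩, ⟨c, hcellT', ⟨m, hsplit⟩⟩⟩
  · rw [hc] at hnone
    simp at hnone
end

section
/- Let μ ⊆ λ be Young diagrams. The concatenation map T = (T⁽¹⁾,…,T⁽ᵏ⁾) ↦ ⊔ᵢ T⁽ⁱ⁾ is a bijection from the set Fix(λ/μ) of fixed points of Φ onto the set RSPP(λ/μ) of row-strict plane partitions of shape λ/μ, and this bijection preserves weight: wt(T) = x^{⊔ᵢ T⁽ⁱ⁾}. -/
open scoped BigOperators

/-- The weight `wt(T) = ∏ᵢ x^{T⁽ⁱ⁾} = ∏_{c ∈ λ/μ} x_{T(c)}`, as a polynomial in the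
commuting variables `x₀, x₁, x₂, …` (only `x₁, x₂, …` occur, since entries are positive). -/
noncomputable def wt {μ lam : YoungDiagram} (T : XTuple μ lam) : MvPolynomial ℕ ℤ :=
  ∏ c ∈ skewCells μ lam, MvPolynomial.X (T.entry c)

/-- `f` is a row-strict plane partition on the cell set `s`: entries are positive,
strictly decreasing along rows (left to right) and weakly decreasing down columns. -/
def IsRSPPOn (f : ℕ × ℕ → ℕ) (s : Finset (ℕ × ℕ)) : Prop :=
  (∀ c ∈ s, 0 < f c) ∧
  (∀ i j j', j < j' → (i, j) ∈ s → (i, j') ∈ s → f (i, j') < f (i, j)) ∧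
  (∀ i i' j, i ≤ i' → (i, j) ∈ s → (i', j) ∈ s → f (i', j) ≤ f (i, j))

open scoped BigOperators

/-!
`Φ T = T` exactly when `cell(T) = ∅`: otherwise splitting off `cell(T)` (an outer corner of
its diagram, being the largest cell of a semistandard piece) or merging it into the previous
piece yields a genuine element of `X_μ^λ` of a different length.

At a fixed point no cell is splittable, so every piece is a single cell, and no cell is
mergeable, so each of these cells is smaller than the one before it in the total order of
cells. A fixed point therefore adds the cells of `λ/μ` one at a time in decreasing order and
is determined by its filling. For a filling of the skew shape `λ/μ`, this order reverses the
componentwise order of cells exactly when the filling is a row-strict plane partition; hence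
the filling of a fixed point is one, and every row-strict plane partition is the filling of
the fixed point built from its decreasing enumeration of cells.
-/

open Finset

section CellOrder

variable {f : ℕ × ℕ → ℕ} {c c' : ℕ × ℕ}

def cellKey (f : ℕ × ℕ → ℕ) (c : ℕ × ℕ) : ℕ ×ₗ ℕ ×ₗ ℕᵒᵈ :=
  toLex (f c, toLex (c.2, OrderDual.toDual c.1))

lemma cellLT_iff_cellKey_lt : cellLT f c c' ↔ cellKey f c < cellKey f c' := by
  simp only [cellLT, cellKey, Prod.Lex.toLex_lt_toLex, OrderDual.toDual_lt_toDual]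

lemma cellKey_injective (f : ℕ × ℕ → ℕ) : Function.Injective (cellKey f) := by
  intro c c' h
  simp only [cellKey, toLex_inj, Prod.mk.injEq, OrderDual.toDual_inj] at h
  exact Prod.ext h.2.2 h.2.1

lemma cellLT_asymm_s8 (h : cellLT f c c') : ¬cellLT f c' c := by
  rw [cellLT_iff_cellKey_lt] at *
  exact h.not_gt

lemma exists_cellLT_max (s : Finset (ℕ × ℕ)) (hs : s.Nonempty) :
    ∃ c ∈ s, ∀ c' ∈ s, c' ≠ c → cellLT f c' c := by
  obtain ⟨c, hc, hmax⟩ := s.exists_max_image (cellKey f) hs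
  exact ⟨c, hc, fun c' hc' hne =>
    cellLT_iff_cellKey_lt.2 ((hmax c' hc').lt_of_ne ((cellKey_injective f).ne hne))⟩

end CellOrder

section Rank

variable {f : ℕ × ℕ → ℕ} {s : Finset (ℕ × ℕ)} {c d : ℕ × ℕ} {j : ℕ}

def cellRank (f : ℕ × ℕ → ℕ) (s : Finset (ℕ × ℕ)) (c : ℕ × ℕ) : ℕ :=
  #{d ∈ s | cellKey f c < cellKey f d}

lemma cellRank_lt_cellRank (hd : d ∈ s) (h : cellKey f c < cellKey f d) :
    cellRank f s d < cellRank f s c := by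
  refine card_lt_card ((ssubset_iff_of_subset fun x hx => ?_).2 ⟨d, ?_, ?_⟩)
  · rw [mem_filter] at hx ⊢
    exact ⟨hx.1, h.trans hx.2⟩
  · exact mem_filter.2 ⟨hd, h⟩
  · simp

lemma cellRank_lt_card (hc : c ∈ s) : cellRank f s c < #s :=
  card_lt_card (filter_ssubset.2 ⟨c, hc, lt_irrefl _⟩)

lemma cellRank_injOn : Set.InjOn (cellRank f s) s := fun c hc d hd h => by
  by_contra hne
  rcases ((cellKey_injective f).ne hne).lt_or_gt with hlt | hlt
  · exact (cellRank_lt_cellRank hd hlt).ne h.symm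
  · exact (cellRank_lt_cellRank hc hlt).ne h

lemma exists_filter_cellRank_eq_singleton (hj : j < #s) :
    ∃ c ∈ s, {d ∈ s | cellRank f s d = j} = {c} := by
  have himage : s.image (cellRank f s) = range #s :=
    eq_of_subset_of_card_le (fun _ hr => by
      obtain ⟨c, hc, rfl⟩ := mem_image.1 hr
      exact mem_range.2 (cellRank_lt_card hc))
      (by rw [card_range, card_image_of_injOn cellRank_injOn])
  obtain ⟨c, hc, rfl⟩ := mem_image.1 (himage ▸ mem_range.2 hj)
  exact ⟨c, hc, eq_singleton_iff_unique_mem.2 ⟨mem_filter.2 ⟨hc, rfl⟩,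
    fun d hd => cellRank_injOn (mem_filter.1 hd).1 hc (mem_filter.1 hd).2⟩⟩

end Rank

section Fillings

variable {f : ℕ × ℕ → ℕ} {c c' : ℕ × ℕ} {s t : Finset (ℕ × ℕ)}

namespace IsSSYTOn

lemma mono (h : IsSSYTOn f t) (hst : s ⊆ t) : IsSSYTOn f s :=
  ⟨fun c hc => h.1 c (hst hc), fun i j j' hj h₁ h₂ => h.2.1 i j j' hj (hst h₁) (hst h₂),
    fun i i' j hi h₁ h₂ => h.2.2 i i' j hi (hst h₁) (hst h₂)⟩

lemma cellLT_of_row (h : IsSSYTOn f s) {i j j' : ℕ} (hj : j < j') (h₁ : (i, j) ∈ s)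
    (h₂ : (i, j') ∈ s) : cellLT f (i, j) (i, j') := by
  have := h.2.1 i j j' hj.le h₁ h₂
  unfold cellLT
  omega

lemma cellLT_of_col (h : IsSSYTOn f s) {i i' j : ℕ} (hi : i < i') (h₁ : (i, j) ∈ s)
    (h₂ : (i', j) ∈ s) : cellLT f (i, j) (i', j) :=
  Or.inl (h.2.2 i i' j hi h₁ h₂)

end IsSSYTOn

lemma isSSYTOn_singleton (h : 0 < f c) : IsSSYTOn f {c} := by
  refine ⟨by simpa using h, ?_, ?_⟩
  · simp only [mem_singleton]
    rintro i j j' - rfl h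
    simp [h]
  · simp only [mem_singleton]
    rintro i i' j hi rfl h
    simp only [Prod.mk.injEq] at h
    omega

lemma isSSYTOn_pair (h : 0 < f c) (h' : 0 < f c') (hlt : cellLT f c c') (hle : ¬c' ≤ c) :
    IsSSYTOn f {c, c'} := by
  refine ⟨by simp [h, h'], ?_, ?_⟩
  · intro i j j' hj h₁ h₂
    simp only [mem_insert, mem_singleton] at h₁ h₂
    rcases h₁ with rfl | rfl <;> rcases h₂ with h₂ | h₂
    · simp_all
    · subst h₂; unfold cellLT at hlt; omega
    · exact absurd (h₂ ▸ Prod.mk_le_mk.2 ⟨le_rfl, hj⟩) hle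
    · simp_all
  · intro i i' j hi h₁ h₂
    simp only [mem_insert, mem_singleton] at h₁ h₂
    rcases h₁ with rfl | rfl <;> rcases h₂ with h₂ | h₂
    · simp only [Prod.mk.injEq] at h₂; omega
    · subst h₂; unfold cellLT at hlt; omega
    · exact absurd (h₂ ▸ Prod.mk_le_mk.2 ⟨hi.le, le_rfl⟩) hle
    · simp only [Prod.mk.injEq] at h₂; omega

end Fillings

section SkewShape

variable {μ lam : YoungDiagram}

lemma ordConnected_skewCells : (skewCells μ lam : Set (ℕ × ℕ)).OrdConnected := by
  refine ⟨fun a ha b hb m hm => ?_⟩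
  simp only [skewCells, coe_sdiff, Set.mem_sdiff, mem_coe] at ha hb ⊢
  exact ⟨lam.isLowerSet hm.2 hb.1, fun h => ha.2 (μ.isLowerSet hm.1 h)⟩

lemma isRSPPOn_skewCells_iff {f : ℕ × ℕ → ℕ} :
    IsRSPPOn f (skewCells μ lam) ↔ (∀ c ∈ skewCells μ lam, 0 < f c) ∧
      StrictAntiOn (cellKey f) (skewCells μ lam : Set (ℕ × ℕ)) := by
  refine ⟨fun hf => ⟨hf.1, fun a ha b hb hab => ?_⟩, fun ⟨hpos, hanti⟩ => ⟨hpos, ?_, ?_⟩⟩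
  · obtain ⟨i, j⟩ := a
    obtain ⟨i', j'⟩ := b
    have hm : (i, j') ∈ skewCells μ lam :=
      ordConnected_skewCells.out ha hb ⟨Prod.mk_le_mk.2 ⟨le_rfl, hab.le.2⟩,
        Prod.mk_le_mk.2 ⟨hab.le.1, le_rfl⟩⟩
    have hcol := hf.2.2 i i' j' hab.le.1 hm hb
    rw [← cellLT_iff_cellKey_lt]
    rcases hab.le.2.lt_or_eq with hj | rfl
    · exact Or.inl (hcol.trans_lt (hf.2.1 i j j' hj ha hm))
    · have hi : i < i' := lt_of_le_of_ne hab.le.1 (fun h => hab.ne (by rw [h]))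
      dsimp only [cellLT] at hcol ⊢
      omega
  · intro i j j' hj h₁ h₂
    have := cellLT_iff_cellKey_lt.2 (hanti h₁ h₂ (Prod.mk_lt_mk.2 (Or.inr ⟨le_rfl, hj⟩)))
    unfold cellLT at this
    omega
  · intro i i' j hi h₁ h₂
    rcases hi.lt_or_eq with hi | rfl
    · have := cellLT_iff_cellKey_lt.2 (hanti h₁ h₂ (Prod.mk_lt_mk.2 (Or.inl ⟨hi, le_rfl⟩)))
      unfold cellLT at this
      omega
    · exact le_rfl

end SkewShape

def YoungDiagram.eraseCorner (ν : YoungDiagram) (c : ℕ × ℕ) (hr : (c.1, c.2 + 1) ∉ ν)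
    (hb : (c.1 + 1, c.2) ∉ ν) : YoungDiagram where
  cells := ν.cells.erase c
  isLowerSet a b hba ha := by
    simp only [coe_erase, Set.mem_sdiff, mem_coe, Set.mem_singleton_iff] at ha ⊢
    refine ⟨ν.isLowerSet hba ha.1, ?_⟩
    rintro rfl
    rw [YoungDiagram.mem_cells] at ha
    rcases hba.1.lt_or_eq with h | h
    · exact hb (ν.up_left_mem h hba.2 ha.1)
    · exact hr (ν.up_left_mem h.le (lt_of_le_of_ne hba.2 fun h' => ha.2 (Prod.ext h h').symm) ha.1)

namespace XTuple

section Chain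

variable {μ lam : YoungDiagram} (T : XTuple μ lam) {c c' : ℕ × ℕ} {a b i j : ℕ}

lemma chain_mono : Monotone fun i => (T.chain i).cells := by
  refine monotone_nat_of_le_succ fun i => ?_
  by_cases h : i < T.k
  · exact (T.chain_strict i h).subset
  · simp only [T.chain_last i (not_lt.1 h), T.chain_last (i + 1) (by omega), le_rfl]

lemma cells_subset_chain (i : ℕ) : μ.cells ⊆ (T.chain i).cells := by
  simpa [T.chain_zero] using T.chain_mono (Nat.zero_le i)

lemma chain_subset_cells (i : ℕ) : (T.chain i).cells ⊆ lam.cells := by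
  rcases le_total T.k i with h | h
  · rw [T.chain_last i h]
  · simpa [T.chain_last T.k le_rfl] using T.chain_mono h

@[simp]
lemma mem_pieceCells : c ∈ pieceCells T i ↔ c ∈ (T.chain (i + 1)).cells ∧ c ∉ (T.chain i).cells :=
  mem_sdiff

lemma mem_chain_iff_lt (hc : c ∈ pieceCells T a) : c ∈ (T.chain j).cells ↔ a < j := by
  rw [mem_pieceCells] at hc
  refine ⟨fun h => not_le.1 fun hja => hc.2 (T.chain_mono hja h), fun h => T.chain_mono h hc.1⟩

lemma eq_of_mem_pieceCells (ha : c ∈ pieceCells T a) (hb : c ∈ pieceCells T b) : a = b := by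
  have h₁ := (T.mem_chain_iff_lt ha).1 ((T.mem_pieceCells).1 hb).1
  have h₂ := mt (T.mem_chain_iff_lt ha).2 ((T.mem_pieceCells).1 hb).2
  omega

lemma pieceCells_subset_skewCells (i : ℕ) : pieceCells T i ⊆ skewCells μ lam := fun c hc => by
  rw [mem_pieceCells] at hc
  exact mem_sdiff.2 ⟨T.chain_subset_cells _ hc.1, fun h => hc.2 (T.cells_subset_chain i h)⟩

lemma exists_mem_pieceCells (hc : c ∈ skewCells μ lam) : ∃ i < T.k, c ∈ pieceCells T i := by
  rw [skewCells, mem_sdiff] at hc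
  obtain ⟨i, hi, hi'⟩ := Nat.exists_not_and_succ_of_not_zero_of_exists
    (p := fun i => c ∈ (T.chain i).cells) (by simpa [T.chain_zero] using hc.2)
    ⟨T.k, by rw [T.chain_last T.k le_rfl]; exact hc.1⟩
  refine ⟨i, not_le.1 fun h => hi ?_, (T.mem_pieceCells).2 ⟨hi', hi⟩⟩
  rw [T.chain_last i h]
  exact hc.1

lemma pieceCells_nonempty (hi : i < T.k) : (pieceCells T i).Nonempty :=
  sdiff_nonempty.2 (T.chain_strict i hi).not_subset

lemma mem_pieceCells_of_le (hc : c ∈ pieceCells T i) (hc' : c' ∈ (T.chain (i + 1)).cells)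
    (hle : c ≤ c') : c' ∈ pieceCells T i :=
  (T.mem_pieceCells).2 ⟨hc', fun h => ((T.mem_pieceCells).1 hc).2 ((T.chain i).isLowerSet hle h)⟩

lemma not_le_of_mem_pieceCells (hc : c ∈ pieceCells T a) (hc' : c' ∈ pieceCells T b)
    (hba : b < a) : ¬c ≤ c' := fun hle =>
  ((T.mem_pieceCells).1 hc).2 ((T.chain a).isLowerSet hle ((T.mem_chain_iff_lt hc').2 hba))

def insertStep (i : ℕ) (ν : YoungDiagram) (hi : i < T.k) (h₁ : (T.chain i).cells ⊂ ν.cells)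
    (h₂ : ν.cells ⊂ (T.chain (i + 1)).cells) : XTuple μ lam where
  k := T.k + 1
  chain j := if j ≤ i then T.chain j else if j = i + 1 then ν else T.chain (j - 1)
  chain_zero := by simp [T.chain_zero]
  chain_last j hj := by
    rw [if_neg (by omega), if_neg (by omega)]
    exact T.chain_last _ (by omega)
  chain_strict j hj := by
    split_ifs <;> first | omega | skip
    · exact T.chain_strict j (by omega)
    · obtain rfl : j = i := by omega
      exact h₁
    · obtain rfl : j = i + 1 := by omega
      simpa using h₂
    · rw [show j + 1 - 1 = j - 1 + 1 by omega]
      exact T.chain_strict _ (by omega)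
  entry := T.entry
  entry_eq_zero := T.entry_eq_zero
  piece_ssyt j hj := by
    split_ifs <;> first | omega | skip
    · exact T.piece_ssyt j (by omega)
    · obtain rfl : j = i := by omega
      exact (T.piece_ssyt j hi).mono (sdiff_subset_sdiff h₂.subset subset_rfl)
    · obtain rfl : j = i + 1 := by omega
      exact (T.piece_ssyt i hi).mono (sdiff_subset_sdiff subset_rfl h₁.subset)
    · rw [show j + 1 - 1 = j - 1 + 1 by omega]
      exact T.piece_ssyt _ (by omega)

def deleteStep (i : ℕ) (hi : i + 1 < T.k)
    (hs : IsSSYTOn T.entry (pieceCells T i ∪ pieceCells T (i + 1))) : XTuple μ lam where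
  k := T.k - 1
  chain j := if j ≤ i then T.chain j else T.chain (j + 1)
  chain_zero := by simp [T.chain_zero]
  chain_last j hj := by
    rw [if_neg (by omega)]
    exact T.chain_last _ (by omega)
  chain_strict j hj := by
    split_ifs <;> first | omega | skip
    · exact T.chain_strict j (by omega)
    · obtain rfl : j = i := by omega
      exact (T.chain_strict j (by omega)).trans_subset (T.chain_mono (Nat.le_succ _))
    · exact T.chain_strict _ (by omega)
  entry := T.entry
  entry_eq_zero := T.entry_eq_zero
  piece_ssyt j hj := by
    split_ifs <;> first | omega | skip
    · exact T.piece_ssyt j (by omega)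
    · obtain rfl : j = i := by omega
      rwa [pieceCells, pieceCells, union_comm, sdiff_union_sdiff_cancel
        (T.chain_mono (Nat.le_succ (j + 1))) (T.chain_mono (Nat.le_succ j))] at hs
    · exact T.piece_ssyt _ (by omega)

end Chain

variable {μ lam : YoungDiagram} {T T' : XTuple μ lam} {c c' d : ℕ × ℕ} {a b i j : ℕ}

lemma lt_k_of_mem_pieceCells (hc : c ∈ pieceCells T i) : i < T.k := by
  by_contra h
  rw [mem_pieceCells, T.chain_last i (not_lt.1 h), T.chain_last (i + 1) (by omega)] at hc
  exact hc.2 hc.1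

lemma ext_of_cells (hk : T.k = T'.k) (hc : ∀ j, (T.chain j).cells = (T'.chain j).cells)
    (he : T.entry = T'.entry) : T = T' := by
  obtain ⟨k, chain, _, _, _, entry, _, _⟩ := T
  obtain ⟨k', chain', _, _, _, entry', _, _⟩ := T'
  obtain rfl : chain = chain' := funext fun j => YoungDiagram.ext (hc j)
  dsimp only at hk he
  subst hk he
  rfl

lemma card_chain_cells (j : ℕ) (hj : j ≤ T.k) (hpieces : ∀ i < T.k, #(pieceCells T i) = 1) :
    #(T.chain j).cells = #μ.cells + j := by
  induction j with
  | zero => rw [T.chain_zero, add_zero]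
  | succ j ih =>
    have h : #(pieceCells T j) + #(T.chain j).cells = #(T.chain (j + 1)).cells :=
      card_sdiff_add_card_eq_card (T.chain_mono j.le_succ)
    rw [hpieces j (by omega)] at h
    have := ih (by omega)
    omega

lemma mem_skewCells_of_splittableCell_or_mergeableCell
    (h : SplittableCell T c ∨ MergeableCell T c) : c ∈ skewCells μ lam := by
  rcases h with ⟨i, hs⟩ | ⟨i, hm⟩
  exacts [T.pieceCells_subset_skewCells i hs.2.1, T.pieceCells_subset_skewCells i hm.2.2.1]

lemma cellOf_eq_none_iff :
    cellOf T = none ↔ ∀ c, ¬(SplittableCell T c ∨ MergeableCell T c) := by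
  classical
  refine ⟨fun h c hc => ?_, fun h => dif_neg fun ⟨c, hc, _⟩ => h c hc⟩
  obtain ⟨c', hc', hmax⟩ := exists_cellLT_max (f := T.entry)
    ((skewCells μ lam).filter fun c => SplittableCell T c ∨ MergeableCell T c)
    ⟨c, mem_filter.2 ⟨mem_skewCells_of_splittableCell_or_mergeableCell hc, hc⟩⟩
  refine Option.some_ne_none _ ((dif_pos ⟨c', (mem_filter.1 hc').2, fun d hd => ?_⟩).symm.trans h)
  exact hmax d (mem_filter.2 ⟨mem_skewCells_of_splittableCell_or_mergeableCell hd, hd⟩)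

lemma splittableCell_or_mergeableCell_of_cellOf_eq_some (h : cellOf T = some c) :
    SplittableCell T c ∨ MergeableCell T c := by
  unfold cellOf at h
  split_ifs at h with hex
  exact Option.some_inj.1 h ▸ hex.choose_spec.1

lemma SplittableAt.not_cellLT (hs : SplittableAt T c i) (hd : d ∈ pieceCells T i) :
    ¬cellLT T.entry c d := fun h =>
  cellLT_asymm_s8 h (hs.2.2.2 d hd fun hdc => by simp [hdc, cellLT] at h)

lemma SplittableAt.right_notMem (hs : SplittableAt T c i) : (c.1, c.2 + 1) ∉ T.chain (i + 1) :=
  fun h => by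
    have hd := T.mem_pieceCells_of_le hs.2.1 h (Prod.mk_le_mk.2 ⟨le_rfl, by simp⟩)
    exact SplittableAt.not_cellLT hs hd
      ((T.piece_ssyt i hs.1).cellLT_of_row (Nat.lt_succ_self _) hs.2.1 hd)

lemma SplittableAt.below_notMem (hs : SplittableAt T c i) : (c.1 + 1, c.2) ∉ T.chain (i + 1) :=
  fun h => by
    have hd := T.mem_pieceCells_of_le hs.2.1 h (Prod.mk_le_mk.2 ⟨by simp, le_rfl⟩)
    exact SplittableAt.not_cellLT hs hd
      ((T.piece_ssyt i hs.1).cellLT_of_col (Nat.lt_succ_self _) hs.2.1 hd)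

section Phi

variable (T)

lemma exists_phiRel : ∃ T', PhiRel T T' := by
  cases hc : cellOf T with
  | none => exact ⟨T, Or.inr (Or.inr ⟨hc, rfl⟩)⟩
  | some c =>
    rcases splittableCell_or_mergeableCell_of_cellOf_eq_some hc with ⟨i, hs⟩ | ⟨i, hm⟩
    · have hcp := (T.mem_pieceCells).1 hs.2.1
      obtain ⟨d, hd, hdc⟩ := exists_mem_ne hs.2.2.1 c
      let ν := (T.chain (i + 1)).eraseCorner c (SplittableAt.right_notMem hs)
        (SplittableAt.below_notMem hs)
      have h₁ : (T.chain i).cells ⊂ ν.cells := by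
        refine (ssubset_iff_of_subset fun x hx => mem_erase.2 ⟨?_, T.chain_mono i.le_succ hx⟩).2
          ⟨d, mem_erase.2 ⟨hdc, ((T.mem_pieceCells).1 hd).1⟩, ((T.mem_pieceCells).1 hd).2⟩
        rintro rfl
        exact hcp.2 hx
      refine ⟨T.insertStep i ν hs.1 h₁ (erase_ssubset hcp.1),
        Or.inl ⟨c, i, hc, hs, rfl, rfl, fun j hj => if_pos hj, ?_, fun j hj => ?_⟩⟩
      · simp [insertStep, ν, YoungDiagram.eraseCorner]
      · simp [insertStep, show ¬j ≤ i by omega, show j ≠ i + 1 by omega]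
    · obtain ⟨i, rfl⟩ : ∃ i', i = i' + 1 := ⟨i - 1, by have := hm.1; omega⟩
      have hs := hm.2.2.2.2.1
      rw [Nat.add_sub_cancel] at hs
      refine ⟨T.deleteStep i hm.2.1 hs, Or.inr (Or.inl ⟨c, i + 1, hc, hm, ?_, rfl,
        fun j hj => if_pos (by omega), fun j hj => if_neg (by omega)⟩)⟩
      simp only [deleteStep]
      have := hm.2.1
      omega

lemma phiRel_phi : PhiRel T (Phi T) := by
  have h := T.exists_phiRel
  unfold Phi
  rw [dif_pos h]
  exact h.choose_spec

lemma phi_eq_self_iff : Phi T = T ↔ cellOf T = none := by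
  have h := T.phiRel_phi
  refine ⟨fun hT => ?_, fun hn => ?_⟩
  · rw [hT] at h
    rcases h with ⟨-, -, -, -, hk, -⟩ | ⟨-, -, -, -, hk, -⟩ | ⟨hn, -⟩
    · omega
    · omega
    · exact hn
  · rcases h with ⟨_, _, hc, -⟩ | ⟨_, _, hc, -⟩ | ⟨-, hT⟩
    · simp [hn] at hc
    · simp [hn] at hc
    · exact hT

end Phi

section FixedPoint

variable (hT : cellOf T = none)
include hT

lemma card_pieceCells_eq_one (hi : i < T.k) : #(pieceCells T i) = 1 := by
  obtain ⟨c, hc, hmax⟩ := exists_cellLT_max (f := T.entry) _ (T.pieceCells_nonempty hi)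
  have := (T.pieceCells_nonempty hi).card_pos
  by_contra hne
  exact cellOf_eq_none_iff.1 hT c (Or.inl ⟨i, hi, hc, by omega, hmax⟩)

lemma pieceCells_eq_singleton (hc : c ∈ pieceCells T i) : pieceCells T i = {c} :=
  eq_singleton_iff_unique_mem.2 ⟨hc, fun _ hd =>
    card_le_one.1 (card_pieceCells_eq_one hT (lt_k_of_mem_pieceCells hc)).le _ hd _ hc⟩

/-- Otherwise the cell of piece `i + 1` would be mergeable. -/
lemma cellKey_lt_of_mem_pieceCells_succ (hc : c ∈ pieceCells T i)
    (hc' : c' ∈ pieceCells T (i + 1)) : cellKey T.entry c' < cellKey T.entry c := by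
  have hne : c ≠ c' := fun h => by
    have := T.eq_of_mem_pieceCells hc (h ▸ hc')
    omega
  refine ((cellKey_injective _).ne hne).lt_or_gt.resolve_left fun hlt => ?_
  rw [← cellLT_iff_cellKey_lt] at hlt
  have hk := lt_k_of_mem_pieceCells hc'
  refine cellOf_eq_none_iff.1 hT c' (Or.inr ⟨i + 1, by omega, hk, hc',
    card_pieceCells_eq_one hT hk, ?_, fun d hd => ?_⟩)
  · rw [Nat.add_sub_cancel, pieceCells_eq_singleton hT hc, pieceCells_eq_singleton hT hc',
      ← insert_eq]
    exact isSSYTOn_pair ((T.piece_ssyt i (by omega)).1 c hc) ((T.piece_ssyt _ hk).1 c' hc') hlt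
      (T.not_le_of_mem_pieceCells hc' hc i.lt_succ_self)
  · rw [Nat.add_sub_cancel, pieceCells_eq_singleton hT hc, mem_singleton] at hd
    exact hd ▸ hlt

lemma cellKey_lt_of_mem_pieceCells (hc : c ∈ pieceCells T a) (hc' : c' ∈ pieceCells T b)
    (hab : a < b) : cellKey T.entry c' < cellKey T.entry c := by
  induction b, hab using Nat.le_induction generalizing c' with
  | base => exact cellKey_lt_of_mem_pieceCells_succ hT hc hc'
  | succ b hab ih =>
    obtain ⟨d, hd⟩ := T.pieceCells_nonempty (i := b) (by have := lt_k_of_mem_pieceCells hc'; omega)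
    exact (cellKey_lt_of_mem_pieceCells_succ hT hd hc').trans (ih hd)

lemma filter_cellKey_lt_eq (hc : c ∈ pieceCells T a) :
    {d ∈ skewCells μ lam | cellKey T.entry c < cellKey T.entry d} =
      (T.chain a).cells \ μ.cells := by
  ext d
  simp only [mem_filter, mem_sdiff]
  constructor
  · rintro ⟨hd, hlt⟩
    obtain ⟨b, -, hb⟩ := T.exists_mem_pieceCells hd
    refine ⟨(T.mem_chain_iff_lt hb).2 ?_, (mem_sdiff.1 hd).2⟩
    rcases lt_trichotomy b a with h | rfl | h
    · exact h
    · rw [pieceCells_eq_singleton hT hc, mem_singleton] at hb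
      exact absurd (hb ▸ hlt) (lt_irrefl _)
    · exact absurd hlt (cellKey_lt_of_mem_pieceCells hT hc hb h).not_gt
  · rintro ⟨hd, hdμ⟩
    have hsk : d ∈ skewCells μ lam := mem_sdiff.2 ⟨T.chain_subset_cells a hd, hdμ⟩
    obtain ⟨b, -, hb⟩ := T.exists_mem_pieceCells hsk
    exact ⟨hsk, cellKey_lt_of_mem_pieceCells hT hb hc ((T.mem_chain_iff_lt hb).1 hd)⟩

lemma cellRank_eq (hc : c ∈ pieceCells T a) : cellRank T.entry (skewCells μ lam) c = a := by
  rw [cellRank, filter_cellKey_lt_eq hT hc, card_sdiff_of_subset (T.cells_subset_chain a),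
    card_chain_cells a (lt_k_of_mem_pieceCells hc).le fun i hi => card_pieceCells_eq_one hT hi]
  omega

lemma k_eq_card_skewCells : T.k = #(skewCells μ lam) := by
  have h := card_chain_cells T.k le_rfl fun i hi => card_pieceCells_eq_one hT hi
  have hsub := T.cells_subset_chain T.k
  rw [T.chain_last T.k le_rfl] at h hsub
  rw [skewCells, card_sdiff_of_subset hsub]
  omega

lemma chain_cells_eq (j : ℕ) : (T.chain j).cells =
    μ.cells ∪ {c ∈ skewCells μ lam | cellRank T.entry (skewCells μ lam) c < j} := by
  ext d
  by_cases hdμ : d ∈ μ.cells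
  · simp [hdμ, T.cells_subset_chain j hdμ]
  by_cases hd : d ∈ skewCells μ lam
  · obtain ⟨a, -, ha⟩ := T.exists_mem_pieceCells hd
    simp [hdμ, hd, T.mem_chain_iff_lt ha, cellRank_eq hT ha]
  · have hdj : d ∉ (T.chain j).cells := fun h =>
      hd (mem_sdiff.2 ⟨T.chain_subset_cells j h, hdμ⟩)
    simp [hdμ, hd, hdj]

lemma eq_of_entry_eq (hT' : cellOf T' = none) (he : T.entry = T'.entry) : T = T' :=
  ext_of_cells ((k_eq_card_skewCells hT).trans (k_eq_card_skewCells hT').symm)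
    (fun j => by rw [chain_cells_eq hT, chain_cells_eq hT', he]) he

lemma isRSPPOn_entry : IsRSPPOn T.entry (skewCells μ lam) := by
  refine isRSPPOn_skewCells_iff.2 ⟨fun c hc => ?_, fun c hc d hd hcd => ?_⟩
  · obtain ⟨a, ha, hca⟩ := T.exists_mem_pieceCells hc
    exact (T.piece_ssyt a ha).1 c hca
  · obtain ⟨a, -, ha⟩ := T.exists_mem_pieceCells hc
    obtain ⟨b, -, hb⟩ := T.exists_mem_pieceCells hd
    rcases lt_trichotomy a b with h | rfl | h
    · exact cellKey_lt_of_mem_pieceCells hT ha hb h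
    · rw [pieceCells_eq_singleton hT ha, mem_singleton] at hb
      exact absurd hb hcd.ne'
    · exact absurd hcd.le (T.not_le_of_mem_pieceCells ha hb h)

end FixedPoint

section OfRSPP

variable {f : ℕ × ℕ → ℕ}

def rsppChain (hf : IsRSPPOn f (skewCells μ lam)) (j : ℕ) : YoungDiagram where
  cells := μ.cells ∪ {c ∈ skewCells μ lam | cellRank f (skewCells μ lam) c < j}
  isLowerSet a b hba ha := by
    simp only [coe_union, coe_filter, Set.mem_union, mem_coe, Set.mem_ofPred_eq] at ha ⊢
    by_cases hbμ : b ∈ μ.cells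
    · exact Or.inl hbμ
    rcases ha with ha | ⟨ha, hra⟩
    · exact absurd (μ.isLowerSet hba ha) hbμ
    have hb : b ∈ skewCells μ lam := mem_sdiff.2 ⟨lam.isLowerSet hba (mem_sdiff.1 ha).1, hbμ⟩
    refine Or.inr ⟨hb, ?_⟩
    rcases hba.lt_or_eq with hlt | rfl
    · exact (cellRank_lt_cellRank hb ((isRSPPOn_skewCells_iff.1 hf).2 hb ha hlt)).trans hra
    · exact hra

variable (hf : IsRSPPOn f (skewCells μ lam))

lemma rsppChain_subset_succ : (rsppChain hf j).cells ⊆ (rsppChain hf (j + 1)).cells :=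
  union_subset_union_right (monotone_filter_right _ fun _ _ h => Nat.lt_succ_of_lt h)

lemma rsppChain_succ_sdiff : (rsppChain hf (j + 1)).cells \ (rsppChain hf j).cells =
    {c ∈ skewCells μ lam | cellRank f (skewCells μ lam) c = j} := by
  ext c
  by_cases hc : c ∈ skewCells μ lam
  · simp only [rsppChain, mem_sdiff, mem_union, mem_filter, hc, (mem_sdiff.1 hc).2,
      false_or, true_and]
    omega
  · simp [rsppChain, hc]

def ofRSPP (hsub : μ ≤ lam) (hz : ∀ c ∉ skewCells μ lam, f c = 0) : XTuple μ lam where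
  k := #(skewCells μ lam)
  chain := rsppChain hf
  chain_zero := YoungDiagram.ext (by simp [rsppChain])
  chain_last j hj := YoungDiagram.ext (by
    show μ.cells ∪ _ = lam.cells
    rw [filter_true_of_mem fun c hc => (cellRank_lt_card hc).trans_le hj, skewCells,
      union_sdiff_of_subset (YoungDiagram.cells_subset_iff.2 hsub)])
  chain_strict j hj := by
    obtain ⟨c, -, heq⟩ := exists_filter_cellRank_eq_singleton (f := f) hj
    have hc := rsppChain_succ_sdiff hf ▸ heq ▸ mem_singleton_self c
    exact (ssubset_iff_of_subset (rsppChain_subset_succ hf)).2 ⟨c, mem_sdiff.1 hc⟩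
  entry := f
  entry_eq_zero := hz
  piece_ssyt j hj := by
    obtain ⟨c, hc, heq⟩ := exists_filter_cellRank_eq_singleton (f := f) hj
    rw [rsppChain_succ_sdiff, heq]
    exact isSSYTOn_singleton (hf.1 c hc)

variable (hsub : μ ≤ lam) (hz : ∀ c ∉ skewCells μ lam, f c = 0)

lemma pieceCells_ofRSPP :
    pieceCells (ofRSPP hf hsub hz) j = {c ∈ skewCells μ lam | cellRank f (skewCells μ lam) c = j} :=
  rsppChain_succ_sdiff hf

lemma cellOf_ofRSPP : cellOf (ofRSPP hf hsub hz) = none := by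
  refine cellOf_eq_none_iff.2 fun c => ?_
  rintro (⟨i, hi, -, hcard, -⟩ | ⟨i, hi1, hi, hc, -, -, hprev⟩)
  · obtain ⟨d, -, heq⟩ := exists_filter_cellRank_eq_singleton (f := f) hi
    rw [pieceCells_ofRSPP, heq, card_singleton] at hcard
    exact lt_irrefl _ hcard
  · obtain ⟨d, -, heq⟩ := exists_filter_cellRank_eq_singleton (f := f) (j := i - 1)
      (show i - 1 < #(skewCells μ lam) by have : i < #(skewCells μ lam) := hi; omega)
    have hd : d ∈ pieceCells (ofRSPP hf hsub hz) (i - 1) := by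
      rw [pieceCells_ofRSPP, heq]
      exact mem_singleton_self d
    have hlt := cellLT_iff_cellKey_lt.1 (hprev d hd)
    rw [pieceCells_ofRSPP, mem_filter] at hc hd
    have := cellRank_lt_cellRank (f := f) hc.1 hlt
    omega

end OfRSPP

end XTuple

/-- The concatenation map `T = (T⁽¹⁾, …, T⁽ᵏ⁾) ↦ ⊔ᵢ T⁽ⁱ⁾` (here: `T ↦ T.entry`, the
concatenated filling, normalized to `0` outside `λ/μ`) is a bijection from the set
`Fix(λ/μ)` of fixed points of `Φ` onto the set `RSPP(λ/μ)` of row-strict plane partitions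
of shape `λ/μ`, and it preserves the weight: `wt(T) = x^{⊔ᵢ T⁽ⁱ⁾}`. -/
theorem fix_bijOn_rspp (μ lam : YoungDiagram) (hsub : μ ≤ lam) :
    Set.BijOn (fun T : XTuple μ lam => T.entry)
      {T : XTuple μ lam | Phi T = T}
      {f : ℕ × ℕ → ℕ |
        IsRSPPOn f (skewCells μ lam) ∧ ∀ c ∉ skewCells μ lam, f c = 0} ∧
    ∀ T : XTuple μ lam, Phi T = T →
      wt T = ∏ c ∈ skewCells μ lam, (MvPolynomial.X (T.entry c) : MvPolynomial ℕ ℤ) := by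
  refine ⟨⟨fun T hT => ?_, fun T hT T' hT' he => ?_, fun f hf => ?_⟩, fun T _ => rfl⟩
  · exact ⟨XTuple.isRSPPOn_entry ((XTuple.phi_eq_self_iff T).1 hT), T.entry_eq_zero⟩
  · exact XTuple.eq_of_entry_eq ((XTuple.phi_eq_self_iff T).1 hT)
      ((XTuple.phi_eq_self_iff T').1 hT') he
  · exact ⟨XTuple.ofRSPP hf.1 hsub hf.2,
      (XTuple.phi_eq_self_iff _).2 (XTuple.cellOf_ofRSPP hf.1 hsub hf.2), rfl⟩
end
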